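/- For any density matrix ρ on ℂ^d, the quantity √F(ρ, ρᵀ) = Tr√(√ρ ρᵀ √ρ) equals the sum of the singular values of the complex symmetric matrix A with entries A_{ij} = √(p_i p_j) ⟨ψ_i, ψ_j*⟩, where ρ = Σ_i p_i |ψ_i⟩⟨ψ_i| is the spectral decomposition of ρ. Equivalently, A A* equals √ρ ρᵀ √ρ written in the eigenbasis of ρ. -/

import Mathlib

/-!
Let `U` be the unitary whose columns are the `ψ i` and `D = diag (√p i)`. Then `ρ = U D² Uᴴ`,
`√ρ = U D Uᴴ`, `ρᵀ = Ū D² Uᵀ` and `A = D (Uᴴ Ū) D`, so that `√ρ ρᵀ √ρ = U (A Aᴴ) Uᴴ`.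
The Gram matrix `Uᴴ Ū` is symmetric, hence so is `A`; therefore `A* = Aᴴ` and
`A Aᴴ = (Aᴴ A)ᵀ`. Since the square root commutes with conjugation by `U` and with
transposition, `Tr √(√ρ ρᵀ √ρ) = Tr √(Aᴴ A)`, the sum of the singular values of `A`.
-/

open Matrix
open scoped ComplexOrder

/-- Singular values of a complex square matrix: square roots of eigenvalues of `Aᴴ * A`. -/
noncomputable def singularValues {n : Type*} [Fintype n] [DecidableEq n]
    (A : Matrix n n ℂ) : n → ℝ :=
  fun i => Real.sqrt ((Matrix.isHermitian_conjTranspose_mul_self A).eigenvalues i)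

/-- Trace norm: sum of singular values. -/
noncomputable def traceNorm {n : Type*} [Fintype n] [DecidableEq n]
    (A : Matrix n n ℂ) : ℝ := ∑ i, singularValues A i

/-- Positive-semidefinite square root (zero for non-PSD input). -/
noncomputable def msqrt {n : Type*} [Fintype n] [DecidableEq n]
    (A : Matrix n n ℂ) : Matrix n n ℂ :=
  open scoped Classical in
  if h : A.PosSemidef then (h.1.eigenvectorUnitary : Matrix n n ℂ) *
      diagonal (fun i => ((Real.sqrt (h.1.eigenvalues i) : ℝ) : ℂ)) *
      (star h.1.eigenvectorUnitary : Matrix n n ℂ) else 0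

/-- Root fidelity √F(ρ,σ) = Tr √(√ρ σ √ρ). -/
noncomputable def rootFid {n : Type*} [Fintype n] [DecidableEq n]
    (ρ σ : Matrix n n ℂ) : ℝ := ((msqrt (msqrt ρ * σ * msqrt ρ)).trace).re

/-- A density matrix: positive semidefinite with unit trace. -/
def IsDensity {n : Type*} [Fintype n] [DecidableEq n] (ρ : Matrix n n ℂ) : Prop :=
  ρ.PosSemidef ∧ ρ.trace = 1

/-- Partial transpose on the second tensor factor. -/
noncomputable def ptB {dA dB : ℕ} (X : Matrix (Fin dA × Fin dB) (Fin dA × Fin dB) ℂ) :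
    Matrix (Fin dA × Fin dB) (Fin dA × Fin dB) ℂ :=
  Matrix.of fun p q => X (p.1, q.2) (q.1, p.2)

/-- Hermitian inner product ⟨x,y⟩ = ∑ conj(xᵢ) yᵢ. -/
noncomputable def hinner {ι : Type*} [Fintype ι] (x y : ι → ℂ) : ℂ := ∑ i, star (x i) * y i

/-- Entrywise complex conjugate of a vector. -/
noncomputable def cconj {ι : Type*} (x : ι → ℂ) : ι → ℂ := fun i => star (x i)

section MatrixSqrt

open scoped MatrixOrder

variable {m n : Type*} [Fintype m] [DecidableEq m] [Fintype n] [DecidableEq n]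

theorem msqrt_eq_cfcSqrt {A : Matrix n n ℂ} (h : A.PosSemidef) : msqrt A = CFC.sqrt A := by
  rw [msqrt, dif_pos h, CFC.sqrt_eq_cfc, cfc_nnreal_eq_real _ A, h.1.cfc_eq]
  simp [IsHermitian.cfc, Function.comp_def, max_eq_left (h.eigenvalues_nonneg _)]

theorem posSemidef_msqrt {A : Matrix n n ℂ} (h : A.PosSemidef) : (msqrt A).PosSemidef := by
  rw [msqrt_eq_cfcSqrt h]; exact (CFC.sqrt_nonneg A).posSemidef

theorem msqrt_mul_msqrt {A : Matrix n n ℂ} (h : A.PosSemidef) : msqrt A * msqrt A = A := by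
  rw [msqrt_eq_cfcSqrt h]; exact CFC.sqrt_mul_sqrt_self A h.nonneg

theorem msqrt_mul_self {B : Matrix n n ℂ} (hB : B.PosSemidef) : msqrt (B * B) = B := by
  have hBB : (B * B).PosSemidef := by simpa only [sq] using hB.pow 2
  rw [msqrt_eq_cfcSqrt hBB, CFC.sqrt_mul_self B hB.nonneg]

theorem trace_msqrt {A : Matrix n n ℂ} (h : A.PosSemidef) :
    (msqrt A).trace = ∑ i, (√(h.1.eigenvalues i) : ℂ) := by
  rw [msqrt, dif_pos h, trace_mul_cycle, Unitary.coe_star_mul_self, one_mul, trace_diagonal]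

theorem msqrt_transpose {A : Matrix n n ℂ} (h : A.PosSemidef) : msqrt Aᵀ = (msqrt A)ᵀ := by
  rw [← msqrt_mul_self (posSemidef_msqrt h).transpose, ← transpose_mul, msqrt_mul_msqrt h]

theorem msqrt_conj_of_conjTranspose_mul_self {U : Matrix m n ℂ} {D : Matrix n n ℂ}
    (hU : Uᴴ * U = 1) (hD : D.PosSemidef) : msqrt (U * D * Uᴴ) = U * msqrt D * Uᴴ := by
  have hsq : U * msqrt D * Uᴴ * (U * msqrt D * Uᴴ) = U * D * Uᴴ := by
    simp only [Matrix.mul_assoc, ← Matrix.mul_assoc Uᴴ U, hU, Matrix.one_mul]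
    rw [← Matrix.mul_assoc (msqrt D), msqrt_mul_msqrt hD]
  rw [← hsq, msqrt_mul_self ((posSemidef_msqrt hD).mul_mul_conjTranspose_same U)]

theorem re_trace_msqrt_mul_conjTranspose_of_transpose_eq {A : Matrix n n ℂ} (hA : Aᵀ = A) :
    (msqrt (A * Aᴴ)).trace.re = traceNorm A := by
  have hAAH : A * Aᴴ = (Aᴴ * A)ᵀ := by
    rw [transpose_mul, ← conjTranspose_transpose_eq_transpose_conjTranspose, hA]
  have hAHA := posSemidef_conjTranspose_mul_self A
  rw [hAAH, msqrt_transpose hAHA, trace_transpose, trace_msqrt hAHA, Complex.re_sum]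
  simp [traceNorm, singularValues]

end MatrixSqrt

section Frame

variable {m n : Type*} (ψ : m → n → ℂ)

theorem conjTranspose_mul_mul_apply_eq_hinner [Fintype n] (M : Matrix n n ℂ) (i j : m) :
    ((of ψ)ᵀᴴ * M * (of ψ)ᵀ) i j = hinner (ψ i) (M *ᵥ ψ j) := by
  rw [Matrix.mul_assoc]
  simp only [mul_apply, mulVec, dotProduct, hinner, conjTranspose_apply, transpose_apply, of_apply]

theorem conjTranspose_mul_self_apply_eq_hinner [Fintype n] (i j : m) :
    ((of ψ)ᵀᴴ * (of ψ)ᵀ) i j = hinner (ψ i) (ψ j) := by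
  simp only [mul_apply, hinner, conjTranspose_apply, transpose_apply, of_apply]

theorem conjTranspose_mul_self_eq_one_of_orthonormal [Fintype n] [DecidableEq m]
    (horth : ∀ i j, hinner (ψ i) (ψ j) = if i = j then 1 else 0) :
    (of ψ)ᵀᴴ * (of ψ)ᵀ = 1 := by
  ext i j
  rw [conjTranspose_mul_self_apply_eq_hinner, horth, one_apply]

theorem conjTranspose_mul_map_star_apply_eq_hinner [Fintype n] (i j : m) :
    ((of ψ)ᵀᴴ * (of ψ)ᵀ.map star) i j = hinner (ψ i) (cconj (ψ j)) := by
  simp only [mul_apply, hinner, cconj, conjTranspose_apply, transpose_apply, map_apply, of_apply]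

theorem sum_smul_vecMulVec_cconj [Fintype m] [DecidableEq m] (c : m → ℂ) :
    ∑ i, c i • vecMulVec (ψ i) (cconj (ψ i)) = (of ψ)ᵀ * diagonal c * (of ψ)ᵀᴴ := by
  ext k l
  rw [mul_apply]
  simp only [Matrix.sum_apply, Matrix.smul_apply, vecMulVec_apply, cconj, smul_eq_mul,
    mul_diagonal, conjTranspose_apply, transpose_apply, of_apply]
  exact Finset.sum_congr rfl fun i _ => by ring

end Frame

section Isometry

variable {m n : Type*} [Fintype m] [Fintype n] [DecidableEq n] {U : Matrix m n ℂ}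

theorem conjTranspose_mul_conj_mul_cancel (hU : Uᴴ * U = 1) (X : Matrix n n ℂ) :
    Uᴴ * (U * X * Uᴴ) * U = X := by
  simp only [Matrix.mul_assoc, hU, Matrix.mul_one]
  rw [← Matrix.mul_assoc, hU, Matrix.one_mul]

theorem trace_conj_of_conjTranspose_mul_self (hU : Uᴴ * U = 1) (X : Matrix n n ℂ) :
    (U * X * Uᴴ).trace = X.trace := by
  rw [trace_mul_cycle, hU, Matrix.one_mul]

end Isometry

section ConjugateGram

variable {m n : Type*} [Fintype m]

theorem transpose_conjTranspose_mul_map_star (U : Matrix m n ℂ) :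
    (Uᴴ * U.map star)ᵀ = Uᴴ * U.map star := by
  rw [transpose_mul, conjTranspose_transpose]
  rfl

theorem conjTranspose_conjTranspose_mul_map_star (U : Matrix m n ℂ) :
    (Uᴴ * U.map star)ᴴ = Uᵀ * U := by
  rw [conjTranspose_mul, conjTranspose_conjTranspose, ← transpose_conjTranspose,
    conjTranspose_conjTranspose]

variable [Fintype n] [DecidableEq n]

theorem msqrt_mul_transpose_mul_msqrt_conj {U D : Matrix n n ℂ} (hU : Uᴴ * U = 1)
    (hD : D.PosSemidef) (hDT : Dᵀ = D) :
    msqrt (U * (D * D) * Uᴴ) * (U * (D * D) * Uᴴ)ᵀ * msqrt (U * (D * D) * Uᴴ) =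
      U * (D * (Uᴴ * U.map star) * D * (D * (Uᴴ * U.map star) * D)ᴴ) * Uᴴ := by
  rw [msqrt_conj_of_conjTranspose_mul_self hU (by simpa only [sq] using hD.pow 2),
    msqrt_mul_self hD, conjTranspose_mul, conjTranspose_mul,
    conjTranspose_conjTranspose_mul_map_star]
  simp only [transpose_mul, hD.1.eq, hDT, conjTranspose_transpose, Matrix.mul_assoc]

end ConjugateGram

theorem rootfid_singular_values_general {d : ℕ}
    (ρ : Matrix (Fin d) (Fin d) ℂ)
    (p : Fin d → ℝ) (ψ : Fin d → Fin d → ℂ)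
    (hp : ∀ i, 0 ≤ p i)
    (horth : ∀ i j, hinner (ψ i) (ψ j) = if i = j then 1 else 0)
    (hdec : ρ = ∑ i, (p i : ℂ) • Matrix.vecMulVec (ψ i) (cconj (ψ i)))
    (A : Matrix (Fin d) (Fin d) ℂ)
    (hA : ∀ i j, A i j = (Real.sqrt (p i * p j) : ℂ) * hinner (ψ i) (cconj (ψ j))) :
    rootFid ρ ρᵀ = ∑ i, singularValues A i ∧
    ∀ i j, (A * A.map star) i j
      = hinner (ψ i) ((msqrt ρ * ρᵀ * msqrt ρ).mulVec (ψ j)) := by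
  set U : Matrix (Fin d) (Fin d) ℂ := (of ψ)ᵀ
  set D : Matrix (Fin d) (Fin d) ℂ := diagonal fun i => (√(p i) : ℂ)
  have hU : Uᴴ * U = 1 := conjTranspose_mul_self_eq_one_of_orthonormal ψ horth
  have hD : D.PosSemidef := posSemidef_diagonal_iff.mpr fun i => by
    exact_mod_cast Real.sqrt_nonneg (p i)
  have hDT : Dᵀ = D := diagonal_transpose _
  have hρ : ρ = U * (D * D) * Uᴴ := by
    rw [hdec, diagonal_mul_diagonal, ← sum_smul_vecMulVec_cconj]
    simp only [← Complex.ofReal_mul, Real.mul_self_sqrt (hp _)]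
  have hA_eq : A = D * (Uᴴ * U.map star) * D := by
    ext i j
    rw [mul_diagonal, diagonal_mul, hA, conjTranspose_mul_map_star_apply_eq_hinner,
      Real.sqrt_mul (hp i), Complex.ofReal_mul]
    ring
  have hA_symm : Aᵀ = A := by
    rw [hA_eq, transpose_mul, transpose_mul, hDT, transpose_conjTranspose_mul_map_star,
      ← Matrix.mul_assoc]
  have hA_star : A.map star = Aᴴ := by rw [← transpose_conjTranspose, hA_symm]
  have hM : msqrt ρ * ρᵀ * msqrt ρ = U * (A * Aᴴ) * Uᴴ := by
    rw [hρ, hA_eq]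
    exact msqrt_mul_transpose_mul_msqrt_conj hU hD hDT
  refine ⟨?_, fun i j => ?_⟩
  · rw [rootFid, hM, msqrt_conj_of_conjTranspose_mul_self hU (posSemidef_self_mul_conjTranspose A),
      trace_conj_of_conjTranspose_mul_self hU,
      re_trace_msqrt_mul_conjTranspose_of_transpose_eq hA_symm]
    rfl
  · rw [hA_star, ← conjTranspose_mul_conj_mul_cancel hU (A * Aᴴ), ← hM]
    exact conjTranspose_mul_mul_apply_eq_hinner ψ _ i j

/-- √F(ρ,ρᵀ) equals the sum of singular values of the symmetric matrix
A_{ij} = √(p_i p_j) ⟨ψ_i, ψ_j*⟩ built from the spectral decomposition of ρ, and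
A A* is √ρ ρᵀ √ρ written in the eigenbasis of ρ. -/
theorem rootfid_singular_values {d : ℕ}
    (ρ : Matrix (Fin d) (Fin d) ℂ) (hρ : IsDensity ρ)
    (p : Fin d → ℝ) (ψ : Fin d → Fin d → ℂ)
    (hp : ∀ i, 0 ≤ p i)
    (horth : ∀ i j, hinner (ψ i) (ψ j) = if i = j then 1 else 0)
    (hdec : ρ = ∑ i, (p i : ℂ) • Matrix.vecMulVec (ψ i) (cconj (ψ i)))
    (A : Matrix (Fin d) (Fin d) ℂ)
    (hA : ∀ i j, A i j = (Real.sqrt (p i * p j) : ℂ) * hinner (ψ i) (cconj (ψ j))) :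
    rootFid ρ ρᵀ = ∑ i, singularValues A i ∧
    ∀ i j, (A * A.map star) i j
      = hinner (ψ i) ((msqrt ρ * ρᵀ * msqrt ρ).mulVec (ψ j)) :=
  rootfid_singular_values_general ρ p ψ hp horth hdec A hA
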